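/- arXiv:1904.11182 — 2 statements merged into one kernel-verified Lean document; each statement's English description precedes it below -/
import Mathlib

section
/- Let K : S × S → ℂ be a positive semidefinite kernel on a finite set S with a distinguished point s₀ ∈ S satisfying K(s₀,s₀) = 1. Then there exists a family of complex-valued square-integrable random variables (X_s)_{s ∈ S} on some probability space with X_{s₀} ≡ 1 almost surely, such that K(s,t) = 𝔼(X_s · conj(X_t)) for all s, t ∈ S. -/
/-!
Factor the kernel as a Gram matrix, `K s t = ⟪v s, v t⟫`, with `‖v s₀‖ = 1`. Splitting each
`v s` into its component `K s s₀` along `v s₀` and the orthogonal remainder `w s` gives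
`K s t = K s s₀ * conj (K t s₀) + ⟪w s, w t⟫`. So it suffices to realise the vectors `w s` as
centered random variables with second moments `⟪w s, w t⟫`; a uniformly chosen coordinate of
`w s`, multiplied by an independent random sign, does this.
-/

open Matrix ComplexOrder MeasureTheory

open scoped ComplexConjugate InnerProductSpace

open scoped MatrixOrder Matrix.Norms.L2Operator in
theorem Matrix.PosSemidef.exists_eq_gram {n 𝕜 : Type*} [Fintype n] [RCLike 𝕜]
    {A : Matrix n n 𝕜} (hA : A.PosSemidef) : ∃ v : n → EuclideanSpace 𝕜 n, A = gram 𝕜 v := by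
  classical
  obtain ⟨B, rfl⟩ := CStarAlgebra.nonneg_iff_eq_star_mul_self.mp hA.nonneg
  refine ⟨fun j => WithLp.toLp 2 fun i => B i j, ?_⟩
  ext i j
  simp [gram, mul_apply, PiLp.inner_apply, mul_comm]

theorem inner_sub_inner_smul_sub_inner_smul {𝕜 E : Type*} [RCLike 𝕜] [NormedAddCommGroup E]
    [InnerProductSpace 𝕜 E] {u : E} (hu : ⟪u, u⟫_𝕜 = 1) (x y : E) :
    ⟪x - ⟪u, x⟫_𝕜 • u, y - ⟪u, y⟫_𝕜 • u⟫_𝕜 = ⟪x, y⟫_𝕜 - ⟪x, u⟫_𝕜 * ⟪u, y⟫_𝕜 := by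
  simp only [inner_sub_left, inner_sub_right, inner_smul_left, inner_smul_right, hu,
    inner_conj_symm]
  ring

theorem integral_add_mul_conj_add {Ω : Type*} [MeasurableSpace Ω] {μ : Measure Ω}
    [IsProbabilityMeasure μ] {Y Z : Ω → ℂ} (hY : MemLp Y 2 μ) (hZ : MemLp Z 2 μ)
    (hY₀ : ∫ ω, Y ω ∂μ = 0) (hZ₀ : ∫ ω, Z ω ∂μ = 0) (a b : ℂ) :
    ∫ ω, (a + Y ω) * conj (b + Z ω) ∂μ = a * conj b + ∫ ω, Y ω * conj (Z ω) ∂μ := by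
  have hYi : Integrable Y μ := hY.integrable one_le_two
  have hZi : Integrable (fun ω => conj (Z ω)) μ := hZ.star.integrable one_le_two
  have hYZ : Integrable (fun ω => Y ω * conj (Z ω)) μ :=
    hY.integrable_mul (p := 2) (q := 2) hZ.star
  have hconst : Integrable (fun ω => a * conj b + a * conj (Z ω)) μ :=
    (integrable_const _).add (hZi.const_mul a)
  have hlin : Integrable (fun ω => conj b * Y ω + Y ω * conj (Z ω)) μ :=
    (hYi.const_mul _).add hYZ
  calc ∫ ω, (a + Y ω) * conj (b + Z ω) ∂μ
      = ∫ ω, (a * conj b + a * conj (Z ω)) + (conj b * Y ω + Y ω * conj (Z ω)) ∂μ := by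
        congr 1 with ω
        simp only [map_add]
        ring
    _ = a * conj b + ∫ ω, Y ω * conj (Z ω) ∂μ := by
      rw [integral_add hconst hlin, integral_add (integrable_const _) (hZi.const_mul a),
        integral_add (hYi.const_mul _) hYZ, integral_const, integral_const_mul,
        integral_const_mul, integral_conj, hY₀, hZ₀]
      simp

theorem PMF.integral_uniformOfFintype {α E : Type*} [Fintype α] [Nonempty α]
    [MeasurableSpace α] [MeasurableSingletonClass α] [NormedAddCommGroup E] [NormedSpace ℝ E]
    [CompleteSpace E] (f : α → E) :
    ∫ a, f a ∂(uniformOfFintype α).toMeasure = (Fintype.card α : ℝ)⁻¹ • ∑ a, f a := by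
  simp [integral_eq_sum, uniformOfFintype_apply, Finset.smul_sum]

noncomputable abbrev uniformSignMeasure (ι : Type*) [Fintype ι] [Nonempty ι]
    [MeasurableSpace ι] [MeasurableSingletonClass ι] : Measure (ι × Bool) :=
  (PMF.uniformOfFintype (ι × Bool)).toMeasure

section SignedCoordinates

variable {ι : Type*} [Fintype ι]

/-- The random sign `ω.2` makes this centered, and the factor `√|ι|` compensates the uniform
weight of the coordinate `ω.1`. -/
noncomputable def signedCoord (x : EuclideanSpace ℂ ι) (ω : ι × Bool) : ℂ :=
  (if ω.2 then 1 else -1) * Real.sqrt (Fintype.card ι) * conj (x ω.1)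

@[simp]
theorem signedCoord_zero : signedCoord (0 : EuclideanSpace ℂ ι) = 0 := by
  ext ω
  simp [signedCoord]

variable [Nonempty ι] [MeasurableSpace ι] [MeasurableSingletonClass ι]

theorem integral_signedCoord (x : EuclideanSpace ℂ ι) :
    ∫ ω, signedCoord x ω ∂uniformSignMeasure ι = 0 := by
  simp [PMF.integral_uniformOfFintype, Fintype.sum_prod_type, signedCoord]

theorem integral_signedCoord_mul_conj (x y : EuclideanSpace ℂ ι) :
    ∫ ω, signedCoord x ω * conj (signedCoord y ω) ∂uniformSignMeasure ι = ⟪x, y⟫_ℂ := by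
  have hsq : (Real.sqrt (Fintype.card ι) : ℂ) * Real.sqrt (Fintype.card ι) = Fintype.card ι := by
    rw [← Complex.ofReal_mul, Real.mul_self_sqrt (Nat.cast_nonneg _)]
    simp
  rw [PMF.integral_uniformOfFintype, Complex.real_smul, PiLp.inner_apply, Fintype.sum_prod_type,
    Finset.mul_sum]
  refine Finset.sum_congr rfl fun i _ => ?_
  simp only [signedCoord, Fintype.sum_bool, if_true, Bool.false_eq_true, if_false, map_mul,
    map_neg, map_one, Complex.conj_ofReal, Complex.conj_conj, RCLike.inner_apply,
    Fintype.card_prod, Fintype.card_bool]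
  push_cast
  field_simp
  linear_combination (2 * conj (x i) * y i) * hsq

end SignedCoordinates

theorem kernel_second_moment_representation
    {S : Type*} [Fintype S] (K : S → S → ℂ) (s₀ : S)
    (hK : ∀ (k : ℕ) (σ : Fin k → S),
      (Matrix.of fun i j => K (σ i) (σ j)).PosSemidef)
    (h₀ : K s₀ s₀ = 1) :
    ∃ (Ω : Type) (_ : MeasurableSpace Ω) (μ : Measure Ω) (_ : IsProbabilityMeasure μ)
      (X : S → Ω → ℂ),
      (∀ s, MemLp (X s) 2 μ) ∧
      (X s₀ =ᵐ[μ] fun _ => 1) ∧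
      (∀ s t, K s t = ∫ ω, X s ω * (starRingEnd ℂ) (X t ω) ∂μ) := by
  -- `Ω` must live in `Type`, so the Gram vectors are indexed by `Fin (card S)` rather than `S`.
  set e := Fintype.equivFin S
  obtain ⟨v, hv⟩ := (hK _ e.symm).exists_eq_gram
  have hKv : ∀ s t, K s t = ⟪v (e s), v (e t)⟫_ℂ := fun s t => by
    simpa using congr_fun₂ hv (e s) (e t)
  have hu : ⟪v (e s₀), v (e s₀)⟫_ℂ = 1 := by rw [← hKv, h₀]
  let w s := v (e s) - ⟪v (e s₀), v (e s)⟫_ℂ • v (e s₀)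
  have : Nonempty (Fin (Fintype.card S)) := ⟨e s₀⟩
  refine ⟨_, inferInstance, uniformSignMeasure _, inferInstance,
    fun s ω => K s s₀ + signedCoord (w s) ω, fun s => .of_discrete, ?_, fun s t => ?_⟩
  · have hw : w s₀ = 0 := by simp only [w, hu, one_smul, sub_self]
    exact .of_forall fun ω => by simp [hw, h₀]
  · rw [integral_add_mul_conj_add .of_discrete .of_discrete (integral_signedCoord _)
      (integral_signedCoord _), integral_signedCoord_mul_conj,
      inner_sub_inner_smul_sub_inner_smul hu, hKv s t, hKv s s₀, hKv t s₀, inner_conj_symm]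
    ring
end

section
/- Let Σ₁, Σ₂ be sets with Σ₁ ∩ Σ₂ = {x₀}, and let K₁, K₂ be positive semidefinite kernels on Σ₁, Σ₂ respectively with K₁(x₀,x₀) = K₂(x₀,x₀) = 1. Then the Markov product K₁ *_{x₀} K₂, the kernel on Σ₁ ∪ Σ₂ defined by restricting to K_i on Σ_i × Σ_i and by (σ₁,σ₂) ↦ K₁(σ₁,x₀)·K₂(x₀,σ₂) for σ₁ ∈ Σ₁, σ₂ ∈ Σ₂ (with the conjugate-symmetric value on (σ₂,σ₁)), is a positive semidefinite kernel on Σ₁ ∪ Σ₂. -/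
open Matrix ComplexOrder

/-- A kernel `K` is positive semidefinite on a set `S` if every finite Gram matrix
built from points of `S` is positive semidefinite. -/
def IsPosSemidefKernelOn {X : Type*} (S : Set X) (K : X → X → ℂ) : Prop :=
  ∀ (k : ℕ) (σ : Fin k → X), (∀ i, σ i ∈ S) →
    (Matrix.of fun i j => K (σ i) (σ j)).PosSemidef

/-- The Markov product of two kernels `K₁`, `K₂` on sets `S₁`, `S₂` meeting at `x₀`. -/
noncomputable def markovProduct {X : Type*} (S₁ : Set X) (x₀ : X)
    (K₁ K₂ : X → X → ℂ) : X → X → ℂ := fun σ τ =>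
  open scoped Classical in
  if σ ∈ S₁ then
    if τ ∈ S₁ then K₁ σ τ else K₁ σ x₀ * K₂ x₀ τ
  else
    if τ ∈ S₁ then (starRingEnd ℂ) (K₁ τ x₀ * K₂ x₀ σ) else K₂ σ τ

/-!
On points of `S₁ ∪ S₂` the Markov product is the sum of three kernels: the Schur complements
`Kᵢ σ τ - conj (Kᵢ x₀ σ) * Kᵢ x₀ τ`, pulled back along the maps `rᵢ : S₁ ∪ S₂ → Sᵢ` collapsing
the other piece to `x₀`, and the rank-one kernel `conj (a σ) * a τ` with
`a σ = K₁ x₀ (r₁ σ) * K₂ x₀ (r₂ σ)`. Each Schur complement is positive semidefinite because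
`Kᵢ x₀ x₀ = 1` makes the `1 × 1` block at `x₀` of a Gram matrix positive definite.
-/

section

variable {X : Type*}

def schurComplementKernel (K : X → X → ℂ) (x₀ : X) : X → X → ℂ :=
  fun σ τ => K σ τ - star (K x₀ σ) * K x₀ τ

open scoped Classical in
noncomputable def retractTo (S : Set X) (x₀ σ : X) : X :=
  if σ ∈ S then σ else x₀

lemma retractTo_mem {S T : Set X} {x₀ σ : X} (hx₀ : x₀ ∈ T) (hσ : σ ∈ S → σ ∈ T) :
    retractTo S x₀ σ ∈ T := by
  unfold retractTo
  split_ifs with h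
  exacts [hσ h, hx₀]

lemma isPosSemidefKernelOn_star_mul (S : Set X) (a : X → ℂ) :
    IsPosSemidefKernelOn S fun σ τ => star (a σ) * a τ :=
  fun _ σ _ => posSemidef_vecMulVec_star_self (a ∘ σ)

namespace IsPosSemidefKernelOn

variable {S : Set X} {K L : X → X → ℂ}

lemma posSemidef_gram (h : IsPosSemidefKernelOn S K) {ι : Type*} [Fintype ι] {σ : ι → X}
    (hσ : ∀ i, σ i ∈ S) : (Matrix.of fun i j => K (σ i) (σ j)).PosSemidef := by
  let e := Fintype.equivFin ι
  convert (h _ (σ ∘ e.symm) fun i => hσ _).submatrix e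
  ext i j
  simp

lemma apply_eq_star (h : IsPosSemidefKernelOn S K) {σ τ : X} (hσ : σ ∈ S) (hτ : τ ∈ S) :
    K σ τ = star (K τ σ) := by
  have := (h.posSemidef_gram (σ := ![σ, τ]) (by simp [Fin.forall_fin_two, hσ, hτ])).isHermitian
  simpa using (this.apply 0 1).symm

lemma add (hK : IsPosSemidefKernelOn S K) (hL : IsPosSemidefKernelOn S L) :
    IsPosSemidefKernelOn S (K + L) :=
  fun k σ hσ => (of_add_of _ _).subst (motive := PosSemidef) <| (hK k σ hσ).add (hL k σ hσ)

lemma comp {Y : Type*} {T : Set Y} {f : Y → X} (h : IsPosSemidefKernelOn S K)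
    (hf : Set.MapsTo f T S) : IsPosSemidefKernelOn T fun σ τ => K (f σ) (f τ) :=
  fun k σ hσ => h k (f ∘ σ) fun i => hf (hσ i)

lemma congr (h : IsPosSemidefKernelOn S K) (hKL : ∀ σ ∈ S, ∀ τ ∈ S, K σ τ = L σ τ) :
    IsPosSemidefKernelOn S L := by
  intro k σ hσ
  convert h k σ hσ using 2
  ext i j
  exact (hKL _ (hσ i) _ (hσ j)).symm

lemma schurComplement (h : IsPosSemidefKernelOn S K) {x₀ : X} (hx₀ : x₀ ∈ S)
    (h₀ : K x₀ x₀ = 1) : IsPosSemidefKernelOn S (schurComplementKernel K x₀) := by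
  intro k τ hτ
  let ρ : Unit ⊕ Fin k → X := Sum.elim (fun _ => x₀) τ
  let B : Matrix Unit (Fin k) ℂ := Matrix.of fun _ j => K x₀ (τ j)
  have hG := h.posSemidef_gram (σ := ρ) (by rintro (_ | i) <;> simp [ρ, hx₀, hτ])
  have hblocks : (Matrix.of fun i j => K (ρ i) (ρ j)) =
      fromBlocks 1 B Bᴴ (Matrix.of fun i j => K (τ i) (τ j)) := by
    ext (_ | i) (_ | j) <;> simp [ρ, B, h₀, h.apply_eq_star (hτ _) hx₀]
  let : Invertible (1 : Matrix Unit Unit ℂ) := invertibleOne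
  rw [hblocks, PosDef.fromBlocks₁₁ B _ PosDef.one, inv_one, Matrix.mul_one] at hG
  have hschur : (Matrix.of fun i j => schurComplementKernel K x₀ (τ i) (τ j)) =
      (Matrix.of fun i j => K (τ i) (τ j)) - Bᴴ * B := by
    ext i j
    simp [schurComplementKernel, B, mul_apply]
  rwa [hschur]

end IsPosSemidefKernelOn

end

lemma markovProduct_eq_schurComplementKernel_add {X : Type*} {S₁ S₂ : Set X} {x₀ : X}
    (hx₁ : x₀ ∈ S₁) (hx₂ : x₀ ∈ S₂) {K₁ K₂ : X → X → ℂ}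
    (h₁ : IsPosSemidefKernelOn S₁ K₁) (h₂ : IsPosSemidefKernelOn S₂ K₂)
    (h₁₀ : K₁ x₀ x₀ = 1) (h₂₀ : K₂ x₀ x₀ = 1) {σ : X} (hσ : σ ∈ S₁ ∪ S₂) (τ : X) :
    markovProduct S₁ x₀ K₁ K₂ σ τ =
      schurComplementKernel K₁ x₀ (retractTo S₁ x₀ σ) (retractTo S₁ x₀ τ) +
      schurComplementKernel K₂ x₀ (retractTo S₁ᶜ x₀ σ) (retractTo S₁ᶜ x₀ τ) +
      star (K₁ x₀ (retractTo S₁ x₀ σ) * K₂ x₀ (retractTo S₁ᶜ x₀ σ)) *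
        (K₁ x₀ (retractTo S₁ x₀ τ) * K₂ x₀ (retractTo S₁ᶜ x₀ τ)) := by
  by_cases hσ₁ : σ ∈ S₁ <;> by_cases hτ₁ : τ ∈ S₁ <;>
    simp only [markovProduct, schurComplementKernel, retractTo, Set.mem_compl_iff, hσ₁, hτ₁,
      if_true, if_false, not_true, not_false_eq_true, h₁₀, h₂₀, star_one, one_mul, mul_one]
  · ring
  · rw [h₁.apply_eq_star hσ₁ hx₁]
    ring
  · rw [h₁.apply_eq_star hx₁ hτ₁, h₂.apply_eq_star (hσ.resolve_left hσ₁) hx₂, map_mul,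
      ← Complex.star_def]
    ring
  · ring

theorem markovProduct_posSemidef {X : Type*} (S₁ S₂ : Set X) (x₀ : X)
    (hint : S₁ ∩ S₂ = {x₀})
    (K₁ K₂ : X → X → ℂ)
    (h₁ : IsPosSemidefKernelOn S₁ K₁) (h₂ : IsPosSemidefKernelOn S₂ K₂)
    (h₁₀ : K₁ x₀ x₀ = 1) (h₂₀ : K₂ x₀ x₀ = 1) :
    IsPosSemidefKernelOn (S₁ ∪ S₂) (markovProduct S₁ x₀ K₁ K₂) := by
  obtain ⟨hx₁, hx₂⟩ : x₀ ∈ S₁ ∩ S₂ := hint ▸ rfl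
  have hr₁ : Set.MapsTo (retractTo S₁ x₀) (S₁ ∪ S₂) S₁ := fun _ _ => retractTo_mem hx₁ id
  have hr₂ : Set.MapsTo (retractTo S₁ᶜ x₀) (S₁ ∪ S₂) S₂ :=
    fun _ hσ => retractTo_mem hx₂ hσ.resolve_left
  have hsum := (((h₁.schurComplement hx₁ h₁₀).comp hr₁).add
    ((h₂.schurComplement hx₂ h₂₀).comp hr₂)).add <| isPosSemidefKernelOn_star_mul (S₁ ∪ S₂)
      fun σ => K₁ x₀ (retractTo S₁ x₀ σ) * K₂ x₀ (retractTo S₁ᶜ x₀ σ)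
  exact hsum.congr fun σ hσ τ _ =>
    (markovProduct_eq_schurComplementKernel_add hx₁ hx₂ h₁ h₂ h₁₀ h₂₀ hσ τ).symm
end
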